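/- Suppose c_D, c_N, d_D, d_N are complex numbers, {j₁,...,j_m} are integers with exponents μ_j = jπ/θ₀ ∈ (N+1, N+2), d_{D,j}, d_{N,j} are complex numbers, q_D, q_N are polynomials, and for all (r,θ) in a sector Σ_ε: q_D(r,θ) + c_D r^{N+2}[ln r sin((N+2)θ) + θ cos((N+2)θ)] + d_D r^{N+2} sin((N+2)θ) + Σ_j d_{D,j} r^{μ_j} sin(μ_j θ) + O(r^{N+2+α'}) equals q_N(r,θ) + c_N r^{N+2}[ln r cos((N+2)θ) − θ sin((N+2)θ)] + d_N r^{N+2} cos((N+2)θ) + Σ_j d_{N,j} r^{μ_j} cos(μ_j θ) + O(r^{N+2+α'}), where q_D, q_N are homogeneous expansions containing only terms of degree ≤ N+2. Then c_D = c_N = 0 and d_{D,j} = d_{N,j} = 0 for all j. -/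

import Mathlib

open Finset Set

open Filter Topology Real

lemma hpow0 (u : ℝ) (hu : 0 < u) : Tendsto (fun r : ℝ => r ^ u) (𝓝[>] 0) (𝓝 0) := by
  have h := (Real.continuousAt_rpow_const 0 u (Or.inr hu.le)).tendsto
  rw [Real.zero_rpow hu.ne'] at h
  exact h.mono_left nhdsWithin_le_nhds

lemma hpowC (u : ℝ) (hu : 0 < u) :
    Tendsto (fun r : ℝ => ((r ^ u : ℝ) : ℂ)) (𝓝[>] 0) (𝓝 0) := by
  have := (Complex.continuous_ofReal.tendsto 0).comp (hpow0 u hu)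
  simpa [Function.comp_def] using this

lemma hdivC (t s : ℝ) (h : s < t) :
    Tendsto (fun r : ℝ => ((r ^ t : ℝ) : ℂ) / ((r ^ s : ℝ) : ℂ)) (𝓝[>] 0) (𝓝 0) := by
  apply (hpowC (t - s) (by linarith)).congr'
  filter_upwards [self_mem_nhdsWithin] with r (hr : 0 < r)
  rw [← Complex.ofReal_div, ← Real.rpow_sub hr]

lemma hlogC (s : ℝ) (hs : 0 < s) :
    Tendsto (fun r : ℝ => ((r ^ s : ℝ) : ℂ) * ((Real.log r : ℝ) : ℂ)) (𝓝[>] 0) (𝓝 0) := by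
  have h := tendsto_log_mul_rpow_nhdsGT_zero hs
  have h2 := (Complex.continuous_ofReal.tendsto 0).comp h
  rw [Complex.ofReal_zero] at h2
  apply h2.congr'
  filter_upwards [self_mem_nhdsWithin] with r (hr : 0 < r)
  simp [Function.comp, mul_comm]

lemma termLt (c : ℂ) (t s : ℝ) (h : s < t) :
    Tendsto (fun r : ℝ => c * ((r ^ t : ℝ) : ℂ) / ((r ^ s : ℝ) : ℂ)) (𝓝[>] 0) (𝓝 0) := by
  simpa [mul_div_assoc] using (hdivC t s h).const_mul c

lemma termEq (c : ℂ) (s : ℝ) :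
    Tendsto (fun r : ℝ => c * ((r ^ s : ℝ) : ℂ) / ((r ^ s : ℝ) : ℂ)) (𝓝[>] 0) (𝓝 c) := by
  apply tendsto_const_nhds.congr'
  filter_upwards [self_mem_nhdsWithin] with r (hr : 0 < r)
  rw [mul_div_assoc, div_self (by exact_mod_cast (Real.rpow_pos_of_pos hr s).ne'), mul_one]

lemma termLog (c : ℂ) (t s : ℝ) (h : s < t) :
    Tendsto (fun r : ℝ => c * ((r ^ t : ℝ) : ℂ) * ((Real.log r : ℝ) : ℂ) / ((r ^ s : ℝ) : ℂ))
      (𝓝[>] 0) (𝓝 0) := by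
  have h2 := (hlogC (t - s) (by linarith)).const_mul c
  rw [mul_zero] at h2
  apply h2.congr'
  filter_upwards [self_mem_nhdsWithin] with r (hr : 0 < r)
  have : ((r ^ t : ℝ) : ℂ) = ((r ^ (t - s) : ℝ) : ℂ) * ((r ^ s : ℝ) : ℂ) := by
    rw [← Complex.ofReal_mul, ← Real.rpow_add hr]; ring_nf
  rw [this]
  have hne : ((r ^ s : ℝ) : ℂ) ≠ 0 := by exact_mod_cast (Real.rpow_pos_of_pos hr s).ne'
  field_simp

lemma hloginvC : Tendsto (fun r : ℝ => ((Real.log r : ℝ) : ℂ)⁻¹) (𝓝[>] 0) (𝓝 0) := by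
  have h : Tendsto Real.log (𝓝[>] (0:ℝ)) atBot :=
    Real.tendsto_log_nhdsNE_zero.mono_left
      (nhdsWithin_mono _ (fun x hx => ne_of_gt hx))
  have hT : Tendsto (fun r : ℝ => -Real.log r) (𝓝[>] (0:ℝ)) atTop :=
    tendsto_neg_atBot_atTop.comp h
  have h2' := hT.inv_tendsto_atTop
  have h2 : Tendsto (fun r : ℝ => (Real.log r)⁻¹) (𝓝[>] (0:ℝ)) (𝓝 0) := by
    have := h2'.neg
    rw [neg_zero] at this
    apply this.congr
    intro r
    simp [Pi.inv_apply, inv_neg]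
  have h3 := (Complex.continuous_ofReal.tendsto 0).comp h2
  rw [Complex.ofReal_zero] at h3
  apply h3.congr'
  filter_upwards with r
  simp [Function.comp]

lemma vanish (N : ℕ) (α' : ℝ) (hα' : 0 < α') (ε : ℝ) (hε : 0 < ε)
    (m : ℕ) (μ : Fin m → ℝ) (hinj : Function.Injective μ)
    (hμr : ∀ i, (N:ℝ)+1 < μ i ∧ μ i < (N:ℝ)+2)
    (a : ℕ → ℂ) (L : ℂ) (b : Fin m → ℂ) (R : ℝ → ℂ) (C : ℝ)
    (hR : ∀ r : ℝ, 0 < r → r < ε → ‖R r‖ ≤ C * r ^ ((N:ℝ)+2+α'))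
    (h0 : ∀ r : ℝ, 0 < r → r < ε →
      (∑ k ∈ Finset.range (N+3), a k * ((r ^ (k:ℝ) : ℝ):ℂ))
        + L * ((r ^ ((N:ℝ)+2) : ℝ):ℂ) * ((Real.log r : ℝ) : ℂ)
        + (∑ i : Fin m, b i * ((r ^ μ i : ℝ):ℂ)) + R r = 0) :
    L = 0 ∧ ∀ i, b i = 0 := by
  have hC : 0 ≤ C := by
    have h := hR (ε/2) (by linarith) (by linarith)
    have hp : 0 < (ε/2) ^ ((N:ℝ)+2+α') := Real.rpow_pos_of_pos (by linarith) _
    nlinarith [norm_nonneg (R (ε/2))]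
  set F : ℝ → ℂ := fun r =>
      (∑ k ∈ Finset.range (N+3), a k * ((r ^ (k:ℝ) : ℝ):ℂ))
        + L * ((r ^ ((N:ℝ)+2) : ℝ):ℂ) * ((Real.log r : ℝ) : ℂ)
        + (∑ i : Fin m, b i * ((r ^ μ i : ℝ):ℂ)) + R r with hF
  have hev : ∀ᶠ r in 𝓝[>] (0:ℝ), 0 < r ∧ r < ε ∧ r < Real.exp (-1) := by
    have h1 : ∀ᶠ r in 𝓝[>] (0:ℝ), r < ε :=
      mem_nhdsWithin_of_mem_nhds (Iio_mem_nhds hε)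
    have h2 : ∀ᶠ r in 𝓝[>] (0:ℝ), r < Real.exp (-1) :=
      mem_nhdsWithin_of_mem_nhds (Iio_mem_nhds (Real.exp_pos _))
    filter_upwards [self_mem_nhdsWithin, h1, h2] with r hr h1 h2
    exact ⟨hr, h1, h2⟩
  have ext : ∀ (D : ℝ → ℂ) (X : ℂ), Tendsto (fun r => F r / D r) (𝓝[>] 0) (𝓝 X) → X = 0 := by
    intro D X hX
    refine tendsto_nhds_unique hX ?_
    apply tendsto_const_nhds.congr'
    filter_upwards [hev] with r hr
    rw [show F r = 0 from h0 r hr.1 hr.2.1, zero_div]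
  -- generic remainder estimate
  have hRdiv : ∀ s : ℝ, s ≤ (N:ℝ)+2 → Tendsto (fun r => R r / ((r ^ s : ℝ):ℂ)) (𝓝[>] 0) (𝓝 0) := by
    intro s hs
    rw [tendsto_zero_iff_norm_tendsto_zero]
    apply squeeze_zero' (Eventually.of_forall (fun r => norm_nonneg _))
      (g := fun r : ℝ => C * r ^ ((N:ℝ)+2+α'-s))
    · filter_upwards [hev] with r hr
      have hrp : 0 < r := hr.1
      rw [norm_div, Complex.norm_real, Real.norm_eq_abs,
        abs_of_pos (Real.rpow_pos_of_pos hrp s), div_le_iff₀ (Real.rpow_pos_of_pos hrp s)]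
      calc ‖R r‖ ≤ C * r ^ ((N:ℝ)+2+α') := hR r hrp hr.2.1
        _ = C * r ^ ((N:ℝ)+2+α'-s) * r ^ s := by
            rw [mul_assoc, ← Real.rpow_add hrp]; ring_nf
    · simpa using (hpow0 ((N:ℝ)+2+α'-s) (by linarith)).const_mul C
  -- split the quotient into four pieces
  have hsplit : ∀ (D : ℝ → ℂ) (X₁ X₂ X₃ X₄ : ℂ),
      Tendsto (fun r => (∑ k ∈ Finset.range (N+3), a k * ((r ^ (k:ℝ) : ℝ):ℂ)) / D r) (𝓝[>] 0) (𝓝 X₁) →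
      Tendsto (fun r => L * ((r ^ ((N:ℝ)+2) : ℝ):ℂ) * ((Real.log r : ℝ) : ℂ) / D r) (𝓝[>] 0) (𝓝 X₂) →
      Tendsto (fun r => (∑ i : Fin m, b i * ((r ^ μ i : ℝ):ℂ)) / D r) (𝓝[>] 0) (𝓝 X₃) →
      Tendsto (fun r => R r / D r) (𝓝[>] 0) (𝓝 X₄) →
      Tendsto (fun r => F r / D r) (𝓝[>] 0) (𝓝 (X₁ + X₂ + X₃ + X₄)) := by
    intro D X₁ X₂ X₃ X₄ h1 h2 h3 h4
    have := ((h1.add h2).add h3).add h4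
    apply this.congr
    intro r
    simp only [hF, add_div]
  -- Step A : low coefficients vanish
  have lowA : ∀ k : ℕ, k < N + 2 → a k = 0 := by
    intro k
    induction k using Nat.strong_induction_on with
    | _ k ih =>
      intro hk
      apply ext (fun r => ((r ^ (k:ℝ) : ℝ):ℂ)) (a k)
      have h1 : Tendsto (fun r => (∑ k' ∈ Finset.range (N+3), a k' * ((r ^ (k':ℝ) : ℝ):ℂ)) / ((r ^ (k:ℝ) : ℝ):ℂ)) (𝓝[>] 0) (𝓝 (a k)) := by
        have hsum := tendsto_finset_sum (x := 𝓝[>] (0:ℝ)) (Finset.range (N+3))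
          (f := fun (k' : ℕ) (r : ℝ) => a k' * ((r ^ (k':ℝ) : ℝ):ℂ) / ((r ^ (k:ℝ) : ℝ):ℂ))
          (a := fun k' : ℕ => if k' = k then a k else 0) ?_
        · have hval : (∑ k' ∈ Finset.range (N+3), if k' = k then a k else 0) = a k := by
            rw [Finset.sum_ite_eq' (Finset.range (N+3)) k (fun _ => a k)]
            simp [Finset.mem_range]; omega
          rw [hval] at hsum
          apply hsum.congr
          intro r
          rw [← Finset.sum_div]
        · intro k' _
          rcases lt_trichotomy k' k with h | h | h
          · simp only [if_neg (Nat.ne_of_lt h), ih k' h (by omega)]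
            simpa using tendsto_const_nhds
          · subst h
            simpa using termEq (a k') (k':ℝ)
          · simp only [if_neg (Nat.ne_of_gt h)]
            exact termLt (a k') (k':ℝ) (k:ℝ) (by exact_mod_cast h)
      have h2 := termLog L ((N:ℝ)+2) (k:ℝ) (by
        have : (k:ℝ) < (N:ℝ) + 2 := by exact_mod_cast hk
        linarith)
      have h3 : Tendsto (fun r => (∑ i : Fin m, b i * ((r ^ μ i : ℝ):ℂ)) / ((r ^ (k:ℝ) : ℝ):ℂ)) (𝓝[>] 0) (𝓝 0) := by
        have hsum := tendsto_finset_sum (x := 𝓝[>] (0:ℝ)) (Finset.univ : Finset (Fin m))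
          (f := fun (i : Fin m) (r : ℝ) => b i * ((r ^ μ i : ℝ):ℂ) / ((r ^ (k:ℝ) : ℝ):ℂ))
          (a := fun _ : Fin m => (0:ℂ)) ?_
        · rw [Finset.sum_const_zero] at hsum
          apply hsum.congr
          intro r
          rw [← Finset.sum_div]
        · intro i _
          refine termLt (b i) (μ i) (k:ℝ) ?_
          have h1 := (hμr i).1
          have : (k:ℝ) ≤ (N:ℝ) + 1 := by
            have : k ≤ N + 1 := by omega
            exact_mod_cast this
          linarith
      have h4 := hRdiv (k:ℝ) (by
        have : (k:ℝ) < (N:ℝ) + 2 := by exact_mod_cast hk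
        linarith)
      simpa using hsplit _ (a k) 0 0 0 h1 h2 h3 h4
  -- Step B : fractional coefficients vanish
  have stepB : ∀ i, b i = 0 := by
    by_contra hcon
    push_neg at hcon
    obtain ⟨i', hi'⟩ := hcon
    have hS : (Finset.univ.filter (fun i => b i ≠ 0)).Nonempty := ⟨i', by simp [hi']⟩
    obtain ⟨i₀, hi₀mem, hi₀min⟩ := Finset.exists_min_image _ μ hS
    have hb₀ : b i₀ ≠ 0 := (Finset.mem_filter.mp hi₀mem).2
    apply hb₀
    apply ext (fun r => ((r ^ μ i₀ : ℝ):ℂ)) (b i₀)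
    have h1 : Tendsto (fun r => (∑ k' ∈ Finset.range (N+3), a k' * ((r ^ (k':ℝ) : ℝ):ℂ)) / ((r ^ μ i₀ : ℝ):ℂ)) (𝓝[>] 0) (𝓝 0) := by
      have hsum := tendsto_finset_sum (x := 𝓝[>] (0:ℝ)) (Finset.range (N+3))
        (f := fun (k' : ℕ) (r : ℝ) => a k' * ((r ^ (k':ℝ) : ℝ):ℂ) / ((r ^ μ i₀ : ℝ):ℂ))
        (a := fun _ : ℕ => (0:ℂ)) ?_
      · rw [Finset.sum_const_zero] at hsum
        apply hsum.congr
        intro r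
        rw [← Finset.sum_div]
      · intro k' hk'
        rw [Finset.mem_range] at hk'
        rcases lt_or_ge k' (N+2) with h | h
        · simp only [lowA k' h]
          simpa using tendsto_const_nhds
        · have hk2 : k' = N + 2 := by omega
          refine termLt (a k') (k':ℝ) (μ i₀) ?_
          have := (hμr i₀).2
          rw [hk2]
          push_cast
          linarith
    have h2 := termLog L ((N:ℝ)+2) (μ i₀) (hμr i₀).2
    have h3 : Tendsto (fun r => (∑ i : Fin m, b i * ((r ^ μ i : ℝ):ℂ)) / ((r ^ μ i₀ : ℝ):ℂ)) (𝓝[>] 0) (𝓝 (b i₀)) := by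
      have hsum := tendsto_finset_sum (x := 𝓝[>] (0:ℝ)) (Finset.univ : Finset (Fin m))
        (f := fun (i : Fin m) (r : ℝ) => b i * ((r ^ μ i : ℝ):ℂ) / ((r ^ μ i₀ : ℝ):ℂ))
        (a := fun i : Fin m => if i = i₀ then b i₀ else 0) ?_
      · have hval : (∑ i : Fin m, if i = i₀ then b i₀ else 0) = b i₀ := by
          rw [Finset.sum_ite_eq' Finset.univ i₀ (fun _ => b i₀)]
          simp
        rw [hval] at hsum
        apply hsum.congr
        intro r
        rw [← Finset.sum_div]
      · intro i _
        by_cases hii : i = i₀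
        · subst hii
          simp only [if_pos rfl]
          exact termEq (b i) (μ i)
        · simp only [if_neg hii]
          by_cases hbz : b i = 0
          · simp only [hbz]
            simpa using tendsto_const_nhds
          · have himem : i ∈ Finset.univ.filter (fun i => b i ≠ 0) := by simp [hbz]
            have hle := hi₀min i himem
            have hne : μ i₀ ≠ μ i := fun h => hii (hinj h).symm
            exact termLt (b i) (μ i) (μ i₀) (lt_of_le_of_ne hle hne)
    have h4 := hRdiv (μ i₀) (le_of_lt (hμr i₀).2)
    simpa using hsplit _ 0 0 (b i₀) 0 h1 h2 h3 h4
  refine ⟨?_, stepB⟩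
  -- Step C : the logarithmic coefficient vanishes
  apply ext (fun r => ((r ^ ((N:ℝ)+2) : ℝ):ℂ) * ((Real.log r : ℝ):ℂ)) L
  have hlogne : ∀ r : ℝ, 0 < r → r < Real.exp (-1) → Real.log r < -1 := by
    intro r h1 h2
    have := Real.log_lt_log h1 h2
    rwa [Real.log_exp] at this
  have h1 : Tendsto (fun r => (∑ k' ∈ Finset.range (N+3), a k' * ((r ^ (k':ℝ) : ℝ):ℂ)) / (((r ^ ((N:ℝ)+2) : ℝ):ℂ) * ((Real.log r : ℝ):ℂ))) (𝓝[>] 0) (𝓝 0) := by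
    have hsum := tendsto_finset_sum (x := 𝓝[>] (0:ℝ)) (Finset.range (N+3))
      (f := fun (k' : ℕ) (r : ℝ) => a k' * ((r ^ (k':ℝ) : ℝ):ℂ) / (((r ^ ((N:ℝ)+2) : ℝ):ℂ) * ((Real.log r : ℝ):ℂ)))
      (a := fun _ : ℕ => (0:ℂ)) ?_
    · rw [Finset.sum_const_zero] at hsum
      apply hsum.congr
      intro r
      rw [← Finset.sum_div]
    · intro k' hk'
      rw [Finset.mem_range] at hk'
      rcases lt_or_ge k' (N+2) with h | h
      · simp only [lowA k' h]
        simpa using tendsto_const_nhds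
      · have hk2 : k' = N + 2 := by omega
        subst hk2
        have := hloginvC.const_mul (a (N+2))
        rw [mul_zero] at this
        apply this.congr'
        filter_upwards [hev] with r hr
        have hrp : 0 < r := hr.1
        have hlg : Real.log r ≠ 0 := ne_of_lt (by linarith [hlogne r hrp hr.2.2])
        have hrc : ((r ^ ((N:ℝ)+2) : ℝ):ℂ) ≠ 0 :=
          Complex.ofReal_ne_zero.mpr (Real.rpow_pos_of_pos hrp ((N:ℝ)+2)).ne'
        have hlgc : ((Real.log r : ℝ):ℂ) ≠ 0 := by exact_mod_cast hlg
        have hcast : ((r ^ (((N+2:ℕ)):ℝ) : ℝ):ℂ) = ((r ^ ((N:ℝ)+2) : ℝ):ℂ) := by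
          norm_num
        simp only [hcast]
        field_simp
  have h2 : Tendsto (fun r => L * ((r ^ ((N:ℝ)+2) : ℝ):ℂ) * ((Real.log r : ℝ):ℂ) / (((r ^ ((N:ℝ)+2) : ℝ):ℂ) * ((Real.log r : ℝ):ℂ))) (𝓝[>] 0) (𝓝 L) := by
    apply tendsto_const_nhds.congr'
    filter_upwards [hev] with r hr
    have hrp : 0 < r := hr.1
    have hlg : Real.log r ≠ 0 := ne_of_lt (by linarith [hlogne r hrp hr.2.2])
    have hrc : ((r ^ ((N:ℝ)+2) : ℝ):ℂ) ≠ 0 :=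
      Complex.ofReal_ne_zero.mpr (Real.rpow_pos_of_pos hrp ((N:ℝ)+2)).ne'
    have hlgc : ((Real.log r : ℝ):ℂ) ≠ 0 := by exact_mod_cast hlg
    field_simp
  have h3 : Tendsto (fun r => (∑ i : Fin m, b i * ((r ^ μ i : ℝ):ℂ)) / (((r ^ ((N:ℝ)+2) : ℝ):ℂ) * ((Real.log r : ℝ):ℂ))) (𝓝[>] 0) (𝓝 0) := by
    simp only [stepB, zero_mul, Finset.sum_const_zero, zero_div]
    exact tendsto_const_nhds
  have h4 : Tendsto (fun r => R r / (((r ^ ((N:ℝ)+2) : ℝ):ℂ) * ((Real.log r : ℝ):ℂ))) (𝓝[>] 0) (𝓝 0) := by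
    rw [tendsto_zero_iff_norm_tendsto_zero]
    apply squeeze_zero' (Eventually.of_forall (fun r => norm_nonneg _))
      (g := fun r : ℝ => C * r ^ α')
    · filter_upwards [hev] with r hr
      have hrp : 0 < r := hr.1
      have hlog : Real.log r < -1 := hlogne r hrp hr.2.2
      have h5 : (1:ℝ) ≤ |Real.log r| := by
        rw [abs_of_neg (by linarith)]
        linarith
      rw [norm_div, norm_mul, Complex.norm_real, Complex.norm_real, Real.norm_eq_abs,
        Real.norm_eq_abs, abs_of_pos (Real.rpow_pos_of_pos hrp _)]
      have hden : r ^ ((N:ℝ)+2) * 1 ≤ r ^ ((N:ℝ)+2) * |Real.log r| :=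
        mul_le_mul_of_nonneg_left h5 (Real.rpow_pos_of_pos hrp _).le
      calc ‖R r‖ / (r ^ ((N:ℝ)+2) * |Real.log r|)
          ≤ (C * r ^ ((N:ℝ)+2+α')) / (r ^ ((N:ℝ)+2) * 1) :=
            div_le_div₀ (mul_nonneg hC (Real.rpow_nonneg hrp.le _)) (hR r hrp hr.2.1)
              (by positivity) hden
        _ = C * r ^ α' := by
            rw [mul_one, show (N:ℝ)+2+α' = α' + ((N:ℝ)+2) by ring, Real.rpow_add hrp]
            field_simp
    · simpa using (hpow0 α' hα').const_mul C
  simpa using hsplit _ 0 L 0 0 h1 h2 h3 h4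

lemma ang (c1 c2 : ℂ) (s θ₀ : ℝ) (hs : 0 < s) (hθ₀ : 0 < θ₀) (hπ : θ₀ < Real.pi)
    (h : ∀ θ : ℝ, 0 < θ → θ < θ₀ →
      c1 * ((Real.sin (s*θ) : ℝ):ℂ) - c2 * ((Real.cos (s*θ) : ℝ):ℂ) = 0) :
    c1 = 0 ∧ c2 = 0 := by
  have h2 : c2 = 0 := by
    have hf : Continuous (fun θ : ℝ => c1 * ((Real.sin (s*θ) : ℝ):ℂ) - c2 * ((Real.cos (s*θ) : ℝ):ℂ)) := by
      fun_prop
    have ht := (hf.tendsto 0).mono_left (nhdsWithin_le_nhds (s := Set.Ioi (0:ℝ)))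
    have ht0 : Tendsto (fun θ : ℝ => c1 * ((Real.sin (s*θ) : ℝ):ℂ) - c2 * ((Real.cos (s*θ) : ℝ):ℂ)) (𝓝[>] 0) (𝓝 0) := by
      apply tendsto_const_nhds.congr'
      filter_upwards [self_mem_nhdsWithin, mem_nhdsWithin_of_mem_nhds (Iio_mem_nhds hθ₀)]
        with θ h1 hlt
      exact (h θ h1 hlt).symm
    have hu := tendsto_nhds_unique ht ht0
    simp only [mul_zero, Real.sin_zero, Real.cos_zero] at hu
    simpa using hu
  refine ⟨?_, h2⟩
  set θs : ℝ := min θ₀ (Real.pi / s) / 2 with hθs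
  have hmin : 0 < min θ₀ (Real.pi / s) :=
    lt_min hθ₀ (div_pos Real.pi_pos hs)
  have hθspos : 0 < θs := by positivity
  have hθslt : θs < θ₀ := by
    have := min_le_left θ₀ (Real.pi / s)
    rw [hθs]
    linarith
  have hprod : s * θs ≤ Real.pi / 2 := by
    have h1 : min θ₀ (Real.pi / s) ≤ Real.pi / s := min_le_right _ _
    have h3 : s * (Real.pi / s) = Real.pi := by field_simp
    have := mul_le_mul_of_nonneg_left h1 hs.le
    rw [h3] at this
    rw [hθs]
    linarith [mul_le_mul_of_nonneg_left h1 hs.le]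
  have hsin : 0 < Real.sin (s * θs) := by
    apply Real.sin_pos_of_pos_of_lt_pi (by positivity)
    linarith [Real.pi_pos]
  have heq := h θs hθspos hθslt
  rw [h2, zero_mul, sub_zero, mul_eq_zero] at heq
  rcases heq with h | h
  · exact h
  · exact absurd (by exact_mod_cast h) hsin.ne'

/-- Matching the Dirichlet and Neumann decompositions of `χu` near the corner
(equation (2.36)): comparing asymptotic orders as `r → 0⁺` forces all logarithmic
and fractional-power coefficients to vanish. -/
theorem stmt8 (θ₀ : ℝ) (hθ : θ₀ ∈ Set.Ioo 0 Real.pi) (N : ℕ) (α' ε : ℝ)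
    (hα' : α' ∈ Set.Ioo (0 : ℝ) 1) (hε : 0 < ε)
    (cD cN dD dN : ℂ) (m : ℕ) (j : Fin m → ℤ) (hjinj : Function.Injective j)
    (μ : Fin m → ℝ) (hμ : ∀ i, μ i = (j i : ℝ) * Real.pi / θ₀)
    (hμrange : ∀ i, μ i ∈ Set.Ioo ((N : ℝ) + 1) ((N : ℝ) + 2))
    (dDj dNj : Fin m → ℂ)
    (gD gN : ℕ → ℝ → ℂ) (hgD : ∀ k, Continuous (gD k)) (hgN : ∀ k, Continuous (gN k))
    (RD RN : ℝ → ℝ → ℂ) (CR : ℝ)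
    (hRD : ∀ r θ : ℝ, 0 < r → r < ε → 0 < θ → θ < θ₀ →
      ‖RD r θ‖ ≤ CR * r ^ ((N : ℝ) + 2 + α'))
    (hRN : ∀ r θ : ℝ, 0 < r → r < ε → 0 < θ → θ < θ₀ →
      ‖RN r θ‖ ≤ CR * r ^ ((N : ℝ) + 2 + α'))
    (heq : ∀ r θ : ℝ, 0 < r → r < ε → 0 < θ → θ < θ₀ →
      (∑ k ∈ Finset.range (N + 3), ((r : ℂ)) ^ k * gD k θ)
        + cD * ((r : ℂ)) ^ (N + 2) *
            (((Real.log r : ℝ) : ℂ) * Complex.sin (((N : ℂ) + 2) * (θ : ℂ))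
              + (θ : ℂ) * Complex.cos (((N : ℂ) + 2) * (θ : ℂ)))
        + dD * ((r : ℂ)) ^ (N + 2) * Complex.sin (((N : ℂ) + 2) * (θ : ℂ))
        + (∑ i : Fin m, dDj i * ((r ^ (μ i) : ℝ) : ℂ) * Complex.sin (((μ i : ℝ) : ℂ) * (θ : ℂ)))
        + RD r θ
      =
      (∑ k ∈ Finset.range (N + 3), ((r : ℂ)) ^ k * gN k θ)
        + cN * ((r : ℂ)) ^ (N + 2) *
            (((Real.log r : ℝ) : ℂ) * Complex.cos (((N : ℂ) + 2) * (θ : ℂ))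
              - (θ : ℂ) * Complex.sin (((N : ℂ) + 2) * (θ : ℂ)))
        + dN * ((r : ℂ)) ^ (N + 2) * Complex.cos (((N : ℂ) + 2) * (θ : ℂ))
        + (∑ i : Fin m, dNj i * ((r ^ (μ i) : ℝ) : ℂ) * Complex.cos (((μ i : ℝ) : ℂ) * (θ : ℂ)))
        + RN r θ) :
    cD = 0 ∧ cN = 0 ∧ ∀ i : Fin m, dDj i = 0 ∧ dNj i = 0 := by
  obtain ⟨hθ₀pos, hθ₀π⟩ := hθ
  obtain ⟨hα'0, hα'1⟩ := hα'
  have hμinj : Function.Injective μ := by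
    intro i i' hii
    apply hjinj
    rw [hμ i, hμ i'] at hii
    have hθne : θ₀ ≠ 0 := ne_of_gt hθ₀pos
    field_simp at hii
    have : (j i : ℝ) = (j i' : ℝ) := by
      exact hii
    exact_mod_cast this
  have key : ∀ θ : ℝ, 0 < θ → θ < θ₀ →
      (cD * Complex.sin (((N:ℂ)+2)*(θ:ℂ)) - cN * Complex.cos (((N:ℂ)+2)*(θ:ℂ)) = 0)
      ∧ ∀ i, dDj i * Complex.sin (((μ i : ℝ):ℂ)*(θ:ℂ))
              - dNj i * Complex.cos (((μ i : ℝ):ℂ)*(θ:ℂ)) = 0 := by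
    intro θ hθ1 hθ2
    refine vanish N α' hα'0 ε hε m μ hμinj
      (fun i => ⟨(hμrange i).1, (hμrange i).2⟩)
      (fun k => (gD k θ - gN k θ) + (if k = N+2 then
          (cD*(θ:ℂ)*Complex.cos (((N:ℂ)+2)*(θ:ℂ)) + dD * Complex.sin (((N:ℂ)+2)*(θ:ℂ))
            + cN*(θ:ℂ)*Complex.sin (((N:ℂ)+2)*(θ:ℂ)) - dN * Complex.cos (((N:ℂ)+2)*(θ:ℂ))) else 0))
      (cD * Complex.sin (((N:ℂ)+2)*(θ:ℂ)) - cN * Complex.cos (((N:ℂ)+2)*(θ:ℂ)))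
      (fun i => dDj i * Complex.sin (((μ i : ℝ):ℂ)*(θ:ℂ)) - dNj i * Complex.cos (((μ i : ℝ):ℂ)*(θ:ℂ)))
      (fun r => RD r θ - RN r θ) (2*CR) ?_ ?_
    · intro r hr1 hr2
      calc ‖RD r θ - RN r θ‖ ≤ ‖RD r θ‖ + ‖RN r θ‖ := norm_sub_le _ _
        _ ≤ CR * r ^ ((N:ℝ)+2+α') + CR * r ^ ((N:ℝ)+2+α') :=
            add_le_add (hRD r θ hr1 hr2 hθ1 hθ2) (hRN r θ hr1 hr2 hθ1 hθ2)
        _ = 2*CR * r ^ ((N:ℝ)+2+α') := by ring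
    · intro r hr1 hr2
      have heqr := heq r θ hr1 hr2 hθ1 hθ2
      have e1 : ∀ k : ℕ, ((r ^ ((k:ℕ):ℝ) : ℝ):ℂ) = (r:ℂ)^k := by
        intro k
        rw [Real.rpow_natCast]
        push_cast
        ring
      have e2 : ((r ^ ((N:ℝ)+2) : ℝ):ℂ) = (r:ℂ)^(N+2) := by
        rw [show ((N:ℝ)+2) = ((N+2:ℕ):ℝ) by push_cast; ring, Real.rpow_natCast]
        push_cast
        ring
      simp only [e1, e2]
      set E : ℂ := cD*(θ:ℂ)*Complex.cos (((N:ℂ)+2)*(θ:ℂ)) + dD * Complex.sin (((N:ℂ)+2)*(θ:ℂ))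
            + cN*(θ:ℂ)*Complex.sin (((N:ℂ)+2)*(θ:ℂ)) - dN * Complex.cos (((N:ℂ)+2)*(θ:ℂ)) with hE
      have hsum1 : (∑ k ∈ Finset.range (N+3),
            ((gD k θ - gN k θ) + (if k = N+2 then E else 0)) * (r:ℂ)^k)
          = ((∑ k ∈ Finset.range (N+3), (r:ℂ)^k * gD k θ)
              - (∑ k ∈ Finset.range (N+3), (r:ℂ)^k * gN k θ)) + E * (r:ℂ)^(N+2) := by
        have step1 : ∀ k ∈ Finset.range (N+3),
            ((gD k θ - gN k θ) + (if k = N+2 then E else 0)) * (r:ℂ)^k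
            = ((r:ℂ)^k * gD k θ - (r:ℂ)^k * gN k θ) + (if k = N+2 then E * (r:ℂ)^(N+2) else 0) := by
          intro k _
          by_cases hk : k = N+2
          · subst hk; rw [if_pos rfl, if_pos rfl]; ring
          · simp only [if_neg hk, add_zero]; ring
        rw [Finset.sum_congr rfl step1, Finset.sum_add_distrib, Finset.sum_sub_distrib,
          Finset.sum_ite_eq' (Finset.range (N+3)) (N+2)]
        simp [Finset.mem_range]
      have hsum2 : (∑ i : Fin m, (dDj i * Complex.sin (((μ i : ℝ):ℂ)*(θ:ℂ))
              - dNj i * Complex.cos (((μ i : ℝ):ℂ)*(θ:ℂ))) * ((r ^ μ i : ℝ):ℂ))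
          = (∑ i : Fin m, dDj i * ((r ^ μ i : ℝ):ℂ) * Complex.sin (((μ i : ℝ):ℂ)*(θ:ℂ)))
            - (∑ i : Fin m, dNj i * ((r ^ μ i : ℝ):ℂ) * Complex.cos (((μ i : ℝ):ℂ)*(θ:ℂ))) := by
        rw [← Finset.sum_sub_distrib]
        exact Finset.sum_congr rfl fun i _ => by ring
      rw [hsum1, hsum2]
      linear_combination heqr
  have hNs : ((N:ℂ)+2) = (((N:ℝ)+2 : ℝ):ℂ) := by push_cast; ring
  have h1 := ang cD cN ((N:ℝ)+2) θ₀ (by positivity) hθ₀pos hθ₀π (by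
    intro θ ha hb
    have hk := (key θ ha hb).1
    rw [hNs, show (((N:ℝ)+2 : ℝ):ℂ) * (θ:ℂ) = ((((N:ℝ)+2)*θ : ℝ):ℂ) by push_cast; ring,
      ← Complex.ofReal_sin, ← Complex.ofReal_cos] at hk
    exact hk)
  refine ⟨h1.1, h1.2, fun i => ?_⟩
  have hμpos : 0 < μ i := by
    have := (hμrange i).1
    have hN : (0:ℝ) ≤ (N:ℝ) := Nat.cast_nonneg N
    linarith
  have h2 := ang (dDj i) (dNj i) (μ i) θ₀ hμpos hθ₀pos hθ₀π (by
    intro θ ha hb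
    have hk := (key θ ha hb).2 i
    rw [show ((μ i : ℝ):ℂ) * (θ:ℂ) = ((μ i * θ : ℝ):ℂ) by push_cast; ring,
      ← Complex.ofReal_sin, ← Complex.ofReal_cos] at hk
    exact hk)
  exact ⟨h2.1, h2.2⟩
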